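/- There exist r ∈ (0,1/2), ε > 0, ρ > 0 and φ ∈ ℝ such that for every β ∈ B(1,r) and every b ∈ Λ, the set {z ∈ ℂ : |z| ≥ ρ and arg z ∈ [φ − π/8, φ + 9π/8] (mod 2π)} is contained in the image g_β(U(b,ε)∖{b}), where U(b,ε) = {z ∈ ℂ : |z−b| ≤ ε and −3π/8 ≤ Arg(z−b) ≤ 3π/8}. -/

import Mathlib

open Complex Filter
open scoped ENNReal

/-- `γ₃ = e^{2πi/3}`. -/
noncomputable def gam3 : ℂ := Complex.exp (2 * Real.pi * Complex.I / 3)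

/-- The triangular lattice `Λ = {lλ₁ + m·γ₃λ₁ : l, m ∈ ℤ}` generated by `λ₁`. -/
def lattice (l1 : ℂ) : Set ℂ :=
  {z | ∃ l m : ℤ, z = (l : ℂ) * l1 + (m : ℂ) * (gam3 * l1)}

/-- The Weierstrass function of the triangular lattice generated by `λ₁`. -/
noncomputable def wp (l1 : ℂ) (z : ℂ) : ℂ :=
  1 / z ^ 2 + ∑' p : ℤ × ℤ,
    if p = 0 then 0
    else 1 / (z - ((p.1 : ℂ) * l1 + (p.2 : ℂ) * (gam3 * l1))) ^ 2
         - 1 / ((p.1 : ℂ) * l1 + (p.2 : ℂ) * (gam3 * l1)) ^ 2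

/-- The derivative `℘′` of the Weierstrass function. -/
noncomputable def wp' (l1 : ℂ) (z : ℂ) : ℂ :=
  -2 * ∑' p : ℤ × ℤ, 1 / (z - ((p.1 : ℂ) * l1 + (p.2 : ℂ) * (gam3 * l1))) ^ 3

/-- The orbit of `c` under `g_β = β·℘`. -/
noncomputable def orb (l1 β c : ℂ) : ℕ → ℂ
  | 0 => c
  | n + 1 => β * wp l1 (orb l1 β c n)

/-- The sector `U(b,ε)` about the lattice point `b`. -/
def sector (b : ℂ) (ε : ℝ) : Set ℂ :=
  {z | ‖z - b‖ ≤ ε ∧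
       -(3 * Real.pi / 8) ≤ Complex.arg (z - b) ∧ Complex.arg (z - b) ≤ 3 * Real.pi / 8}

/-
For `β` near `1` and `z` in the given sector of large modulus, `z / β` is large with
`|arg (z / β)| ≤ 11π/16`. Near a lattice point `b`, `℘ (b + ζ) = ζ⁻² + E ζ` with `E` holomorphic at
`0` and `E 0 = 0`, hence Lipschitz on a small disc. The equation `ζ⁻² + E ζ = w` is the fixed-point
equation `ζ = (w - E ζ)^(-1/2)` (principal branch); for `|w|` large this map sends the disc into
itself as a contraction, and the Banach fixed point lies in the image of the map, which is a cone
of half-angle `(11π/16 + π/16) / 2 = 3π/8`.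
-/

open Metric Set
open scoped NNReal

lemma ContDiffAt.exists_lipschitzOnWith_closedBall {𝕜 E F : Type*} [RCLike 𝕜]
    [NormedAddCommGroup E] [NormedSpace 𝕜 E] [NormedAddCommGroup F] [NormedSpace 𝕜 F]
    {f : E → F} {x : E} (hf : ContDiffAt 𝕜 1 f x) :
    ∃ K δ, 0 < δ ∧ LipschitzOnWith K f (closedBall x δ) := by
  obtain ⟨K, t, ht, hK⟩ := hf.exists_lipschitzOnWith
  obtain ⟨δ, hδ, hδt⟩ := nhds_basis_closedBall.mem_iff.1 ht
  exact ⟨K, δ, hδ, hK.mono hδt⟩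

namespace Complex

lemma abs_arg_le_of_norm_sub_one_le {v : ℂ} {η : ℝ} (hη₀ : 0 ≤ η) (hη : η ≤ Real.pi / 2)
    (hv : ‖v - 1‖ ≤ Real.sin η) : |arg v| ≤ η := by
  set d := Real.sin η
  have hd₀ : 0 ≤ d := Real.sin_nonneg_of_nonneg_of_le_pi hη₀ (by linarith [Real.pi_pos])
  have hd₁ : d ≤ 1 := Real.sin_le_one η
  have hsq : (v.re - 1) ^ 2 + v.im ^ 2 ≤ d ^ 2 := by
    have h := pow_le_pow_left₀ (norm_nonneg _) hv 2
    rw [Complex.sq_norm, normSq_apply] at h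
    simpa [sq] using h
  have hre : 0 ≤ v.re := by nlinarith [sq_nonneg v.im]
  have him : |v.im / ‖v‖| ≤ d := by
    rcases eq_or_ne v 0 with rfl | hv₀
    · simpa using hd₀
    rw [abs_div, abs_norm, div_le_iff₀ (norm_pos_iff.2 hv₀)]
    refine abs_le_of_sq_le_sq ?_ (by positivity)
    rw [mul_pow, Complex.sq_norm, normSq_apply]
    have hd₂ : 0 ≤ 1 - d ^ 2 := by nlinarith
    nlinarith [sq_nonneg (v.re - (1 - d ^ 2)), mul_le_mul_of_nonneg_left hsq hd₂]
  rw [arg_of_re_nonneg hre, abs_le]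
  have hη' : -(Real.pi / 2) ≤ η := by linarith [Real.pi_pos]
  constructor
  · rw [← Real.arcsin_sin hη' hη, ← Real.arcsin_neg]
    exact Real.monotone_arcsin (abs_le.1 him).1
  · rw [← Real.arcsin_sin hη' hη]
    exact Real.monotone_arcsin (abs_le.1 him).2

lemma abs_arg_mul_le_of_norm_sub_one_le {w v : ℂ} {η : ℝ} (hw : w ≠ 0) (hη₀ : 0 ≤ η)
    (hη : η < Real.pi / 2) (hv : ‖v - 1‖ ≤ Real.sin η) (hπ : |arg w| + η < Real.pi) :
    |arg (w * v)| ≤ |arg w| + η := by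
  have hv₀ : v ≠ 0 := by
    rintro rfl
    have : Real.sin η < 1 := by
      rw [← Real.sin_pi_div_two]
      exact Real.sin_lt_sin_of_lt_of_le_pi_div_two (by linarith) le_rfl hη
    simp at hv; linarith
  have hvη := abs_arg_le_of_norm_sub_one_le hη₀ hη.le hv
  rw [arg_mul hw hv₀ ⟨by linarith [abs_le.1 hvη, neg_abs_le (arg w)],
    by linarith [abs_le.1 hvη, le_abs_self (arg w)]⟩]
  exact (abs_add_le _ _).trans (by linarith)

lemma arg_cpow_two_inv (u : ℂ) : arg (u ^ (2⁻¹ : ℂ)) = arg u / 2 := by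
  rcases eq_or_ne u 0 with rfl | hu
  · simp
  have him : (log u * 2⁻¹).im = arg u / 2 := by simp [log_im]; ring
  rw [cpow_def_of_ne_zero hu, arg_exp, him, (toIocMod_eq_self _).2]
  constructor <;> linarith [neg_pi_lt_arg u, arg_le_pi u, Real.pi_pos]

lemma cos_mul_norm_le_re_of_abs_arg_le {s : ℂ} {γ : ℝ} (hs : |arg s| ≤ γ) (hγ : γ ≤ Real.pi) :
    Real.cos γ * ‖s‖ ≤ s.re := by
  rw [← norm_mul_cos_arg, mul_comm, ← Real.cos_abs (arg s)]
  exact mul_le_mul_of_nonneg_left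
    (Real.cos_le_cos_of_nonneg_of_le_pi (abs_nonneg _) hγ hs) (norm_nonneg _)

/-- `s⁻¹ - t⁻¹ = (t² - s²) / ((s + t) s t)`, and the cone condition keeps `s + t` away from `0`. -/
lemma norm_inv_sub_inv_le {s t : ℂ} {c m : ℝ} (hc : 0 < c) (hm : 0 < m) (hs : m ≤ ‖s‖)
    (ht : m ≤ ‖t‖) (hs_re : c * ‖s‖ ≤ s.re) (ht_re : c * ‖t‖ ≤ t.re) :
    ‖s⁻¹ - t⁻¹‖ ≤ ‖s ^ 2 - t ^ 2‖ / (2 * c * m ^ 3) := by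
  have hs₀ : s ≠ 0 := norm_pos_iff.1 (hm.trans_le hs)
  have ht₀ : t ≠ 0 := norm_pos_iff.1 (hm.trans_le ht)
  have hst : 2 * c * m ≤ ‖s + t‖ := by
    have := re_le_norm (s + t)
    rw [add_re] at this
    nlinarith
  have hst₀ : s + t ≠ 0 := norm_pos_iff.1 (lt_of_lt_of_le (by positivity) hst)
  have key : s⁻¹ - t⁻¹ = -(s ^ 2 - t ^ 2) / ((s + t) * s * t) := by field_simp; ring
  rw [key, norm_div, norm_neg, norm_mul, norm_mul]
  refine div_le_div_of_nonneg_left (norm_nonneg _) (by positivity) ?_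
  calc 2 * c * m ^ 3 = (2 * c * m) * m * m := by ring
    _ ≤ ‖s + t‖ * ‖s‖ * ‖t‖ := by gcongr

lemma norm_inv_sub_one_le {β : ℂ} {r : ℝ} (hr : r < 1) (hβ : ‖β - 1‖ ≤ r) :
    ‖β⁻¹ - 1‖ ≤ r / (1 - r) := by
  have hβ_norm : 1 - r ≤ ‖β‖ := by
    linarith [norm_sub_norm_le 1 β, norm_sub_rev 1 β, norm_one (α := ℂ)]
  have hβ₀ : β ≠ 0 := norm_pos_iff.1 (by linarith)
  rw [show β⁻¹ - 1 = (1 - β) / β by field_simp, norm_div, norm_sub_rev]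
  exact div_le_div₀ (by linarith [norm_nonneg (β - 1)]) hβ (by linarith) hβ_norm

end Complex

lemma exists_inv_sq_eq_of_lipschitzOnWith {F : ℂ → ℂ} {K : ℝ≥0} {δ m γ : ℝ} (hδ : 0 < δ)
    (hm : δ⁻¹ ≤ m) (hγ : γ < Real.pi / 2) (hK : K ≤ Real.cos γ * m ^ 3)
    (hF : LipschitzOnWith K F (closedBall 0 δ))
    (hF_norm : ∀ ζ ∈ closedBall (0 : ℂ) δ, m ^ 2 ≤ ‖F ζ‖)
    (hF_arg : ∀ ζ ∈ closedBall (0 : ℂ) δ, |arg (F ζ)| ≤ 2 * γ) :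
    ∃ ζ ∈ closedBall (0 : ℂ) δ, ζ ≠ 0 ∧ |arg ζ| ≤ γ ∧ (ζ ^ 2)⁻¹ = F ζ := by
  have hm₀ : 0 < m := (inv_pos.2 hδ).trans_le hm
  have hγ₀ : 0 ≤ γ := by linarith [abs_nonneg (arg (F 0)), hF_arg 0 (mem_closedBall_self hδ.le)]
  have hc : 0 < Real.cos γ := Real.cos_pos_of_mem_Ioo ⟨by linarith, hγ⟩
  set s : ℂ → ℂ := fun ζ ↦ F ζ ^ (2⁻¹ : ℂ)
  have hs_sq : ∀ ζ, s ζ ^ 2 = F ζ := fun ζ ↦ cpow_ofNat_inv_pow _ 2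
  have hs_arg : ∀ ζ ∈ closedBall (0 : ℂ) δ, |arg (s ζ)| ≤ γ := fun ζ hζ ↦ by
    rw [arg_cpow_two_inv, abs_div, abs_two]; linarith [hF_arg ζ hζ]
  have hs_norm : ∀ ζ ∈ closedBall (0 : ℂ) δ, m ≤ ‖s ζ‖ := fun ζ hζ ↦ by
    rw [← pow_le_pow_iff_left₀ hm₀.le (norm_nonneg _) two_ne_zero, ← norm_pow, hs_sq]
    exact hF_norm ζ hζ
  have hs_re : ∀ ζ ∈ closedBall (0 : ℂ) δ, Real.cos γ * ‖s ζ‖ ≤ (s ζ).re := fun ζ hζ ↦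
    cos_mul_norm_le_re_of_abs_arg_le (hs_arg ζ hζ) (by linarith)
  have hmaps : MapsTo (fun ζ ↦ (s ζ)⁻¹) (closedBall 0 δ) (closedBall 0 δ) := fun ζ hζ ↦ by
    rw [mem_closedBall_zero_iff, norm_inv]
    calc ‖s ζ‖⁻¹ ≤ m⁻¹ := inv_anti₀ hm₀ (hs_norm ζ hζ)
      _ ≤ δ := inv_le_of_inv_le₀ hδ hm
  have hlip : LipschitzOnWith (1 / 2) (fun ζ ↦ (s ζ)⁻¹) (closedBall 0 δ) := by
    refine .of_dist_le_mul fun x hx y hy ↦ ?_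
    rw [dist_eq_norm, dist_eq_norm]
    calc ‖(s x)⁻¹ - (s y)⁻¹‖ ≤ ‖F x - F y‖ / (2 * Real.cos γ * m ^ 3) := by
          simpa only [hs_sq] using norm_inv_sub_inv_le hc hm₀ (hs_norm x hx) (hs_norm y hy)
            (hs_re x hx) (hs_re y hy)
      _ ≤ K * ‖x - y‖ / (2 * Real.cos γ * m ^ 3) := by gcongr; exact hF.norm_sub_le hx hy
      _ ≤ ((1 / 2 : ℝ≥0) : ℝ) * ‖x - y‖ := by
          rw [div_le_iff₀ (by positivity)]; push_cast
          nlinarith [norm_nonneg (x - y)]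
  obtain ⟨ζ, hζ, hfix, -⟩ := ContractingWith.exists_fixedPoint' (isClosed_closedBall.isComplete)
    hmaps ⟨by norm_num, hlip.mapsToRestrict hmaps⟩ (mem_closedBall_self hδ.le) (edist_ne_top _ _)
  have hsζ : s ζ ≠ 0 := norm_pos_iff.1 (hm₀.trans_le (hs_norm ζ hζ))
  have hζ_eq : (s ζ)⁻¹ = ζ := hfix
  refine ⟨ζ, hζ, hζ_eq ▸ inv_ne_zero hsζ, ?_, ?_⟩
  · have hπ : arg (s ζ) ≠ Real.pi := by linarith [le_abs_self (arg (s ζ)), hs_arg ζ hζ]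
    rw [← hζ_eq, arg_inv, if_neg hπ, abs_neg]
    exact hs_arg ζ hζ
  · rw [← hs_sq ζ]
    nth_rw 1 [← hζ_eq]
    rw [inv_pow, inv_inv]

lemma exists_inv_sq_add_eq_of_lipschitzOnWith {E : ℂ → ℂ} {K : ℝ≥0} {δ : ℝ} (hδ : 0 < δ)
    (hE₀ : E 0 = 0) (hE : LipschitzOnWith K E (closedBall 0 δ)) {α η γ : ℝ} (hα : 0 ≤ α)
    (hη₀ : 0 < η) (hη : η < Real.pi / 2) (hγ : γ < Real.pi / 2) (hαηγ : α + η ≤ 2 * γ) :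
    ∃ ρ > 0, ∀ w : ℂ, ρ ≤ ‖w‖ → |arg w| ≤ α →
      ∃ ζ ∈ closedBall (0 : ℂ) δ, ζ ≠ 0 ∧ |arg ζ| ≤ γ ∧ (ζ ^ 2)⁻¹ + E ζ = w := by
  have hc : 0 < Real.cos γ := Real.cos_pos_of_mem_Ioo ⟨by linarith, hγ⟩
  have hsin : 0 < Real.sin η := Real.sin_pos_of_pos_of_lt_pi hη₀ (by linarith)
  -- `m` gives `m⁻¹ ≤ δ` and `K ≤ cos γ * m ^ 3`; the terms `K * δ` of `ρ` make `‖E ζ‖` small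
  -- against `‖w‖`, in modulus and in argument.
  set m := δ⁻¹ + 1 + K / Real.cos γ
  have hKc : 0 ≤ K / Real.cos γ := by positivity
  have hm₁ : 1 ≤ m := by linarith [inv_pos.2 hδ]
  refine ⟨m ^ 2 + K * δ / Real.sin η + K * δ, by positivity, fun w hw hwα ↦ ?_⟩
  have hρ : K * δ ≤ Real.sin η * ‖w‖ := by
    rw [← div_le_iff₀' hsin]; linarith [sq_nonneg m, show 0 ≤ (K : ℝ) * δ by positivity]
  have hw₀ : w ≠ 0 := norm_pos_iff.1 (lt_of_lt_of_le (by positivity) hw)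
  have hEδ : ∀ ζ ∈ closedBall (0 : ℂ) δ, ‖E ζ‖ ≤ K * δ := fun ζ hζ ↦ by
    simpa [hE₀] using (hE.norm_sub_le hζ (mem_closedBall_self hδ.le)).trans
      (by gcongr; simpa using hζ)
  have hK : (K : ℝ) ≤ Real.cos γ * m ^ 3 := by
    have : (K : ℝ) ≤ Real.cos γ * m := by
      rw [← div_le_iff₀' hc]; linarith [inv_pos.2 hδ]
    nlinarith [pow_le_pow_right₀ hm₁ (show 1 ≤ 3 by norm_num)]
  obtain ⟨ζ, hζ, hζ₀, hζ_arg, hζ_eq⟩ := exists_inv_sq_eq_of_lipschitzOnWith (F := (w - E ·))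
    hδ (by linarith) hγ hK
    (by simpa using (LipschitzWith.const w).lipschitzOnWith.sub hE)
    (fun ζ hζ ↦ by linarith [norm_sub_norm_le w (E ζ), hEδ ζ hζ, sq_nonneg m,
      show 0 ≤ (K : ℝ) * δ / Real.sin η by positivity])
    (fun ζ hζ ↦ by
      have hsplit : w - E ζ = w * (1 - E ζ / w) := by field_simp
      have hsmall : ‖1 - E ζ / w - 1‖ ≤ Real.sin η := by
        rw [sub_sub_cancel_left, norm_neg, norm_div, div_le_iff₀ (norm_pos_iff.2 hw₀)]
        exact (hEδ ζ hζ).trans hρ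
      rw [hsplit]
      exact (abs_arg_mul_le_of_norm_sub_one_le hw₀ hη₀.le hη hsmall (by linarith)).trans
        (by linarith))
  exact ⟨ζ, hζ, hζ₀, hζ_arg, by rw [hζ_eq]; ring⟩

lemma gam3_im_pos : 0 < gam3.im := by
  rw [gam3, show 2 * Real.pi * I / 3 = ((2 * Real.pi / 3 : ℝ) : ℂ) * I by push_cast; ring,
    exp_ofReal_mul_I_im]
  exact Real.sin_pos_of_pos_of_lt_pi (by positivity) (by linarith [Real.pi_pos])

noncomputable def trianglePeriodPair (l1 : ℂ) (hl1 : l1 ≠ 0) : PeriodPair where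
  ω₁ := l1
  ω₂ := gam3 * l1
  indep := by
    refine LinearIndependent.pair_iff.2 fun s t h ↦ ?_
    have h' : ((s : ℂ) + t * gam3) * l1 = 0 := by
      simp only [Complex.real_smul] at h; linear_combination h
    have h0 := congrArg im ((mul_eq_zero.1 h').resolve_right hl1)
    simp only [add_im, ofReal_im, im_ofReal_mul, zero_im, zero_add] at h0
    have ht : t = 0 := (mul_eq_zero.1 h0).resolve_right gam3_im_pos.ne'
    subst ht
    simpa using (mul_eq_zero.1 h').resolve_right hl1

lemma mem_lattice_trianglePeriodPair {l1 b : ℂ} (hl1 : l1 ≠ 0) (hb : b ∈ lattice l1) :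
    b ∈ (trianglePeriodPair l1 hl1).lattice := by
  obtain ⟨l, m, rfl⟩ := hb
  exact PeriodPair.mem_lattice.2 ⟨l, m, rfl⟩

lemma wp_eq_weierstrassP {l1 : ℂ} (hl1 : l1 ≠ 0) :
    wp l1 = (trianglePeriodPair l1 hl1).weierstrassP := by
  set L := trianglePeriodPair l1 hl1
  funext z
  have hE : L.weierstrassPExcept 0 z = ∑' p : ℤ × ℤ, if p = 0 then 0
      else 1 / (z - ((p.1 : ℂ) * l1 + (p.2 : ℂ) * (gam3 * l1))) ^ 2
        - 1 / ((p.1 : ℂ) * l1 + (p.2 : ℂ) * (gam3 * l1)) ^ 2 := by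
    rw [PeriodPair.weierstrassPExcept, ← L.latticeEquivProd.symm.toEquiv.tsum_eq]
    refine tsum_congr fun p ↦ ?_
    rcases eq_or_ne p 0 with rfl | hp
    · simp
    have hp' : ((L.latticeEquivProd.symm p : L.lattice) : ℂ) ≠ 0 := by simpa using hp
    rw [LinearEquiv.coe_toEquiv, if_neg hp', if_neg hp, L.latticeEquiv_symm_apply]
    rfl
  rw [wp, ← hE, ← L.weierstrassPExcept_add 0 z]
  simp [add_comm]

lemma wp_add_of_mem_lattice {l1 b : ℂ} (hl1 : l1 ≠ 0) (hb : b ∈ lattice l1) (ζ : ℂ) :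
    wp l1 (ζ + b) = (ζ ^ 2)⁻¹ + (trianglePeriodPair l1 hl1).weierstrassPExcept 0 ζ := by
  set L := trianglePeriodPair l1 hl1
  rw [wp_eq_weierstrassP hl1, show ζ + b = ζ + ((⟨b, mem_lattice_trianglePeriodPair hl1 hb⟩ :
    L.lattice) : ℂ) from rfl, L.weierstrassP_add_coe, ← L.weierstrassPExcept_add 0 ζ]
  simp [add_comm]

theorem stmt14 (l1 : ℂ) (hl1 : l1 ≠ 0) :
    ∃ r ε ρ : ℝ, ∃ φ : ℝ, 0 < r ∧ r < 1 / 2 ∧ 0 < ε ∧ 0 < ρ ∧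
      ∀ β ∈ Metric.ball (1 : ℂ) r, ∀ b ∈ lattice l1,
        {z : ℂ | ρ ≤ ‖z‖ ∧
            ∃ θ : ℝ, φ - Real.pi / 8 ≤ θ ∧ θ ≤ φ + 9 * Real.pi / 8 ∧
              z = (‖z‖ : ℂ) * Complex.exp (θ * Complex.I)} ⊆
          (fun z => β * wp l1 z) '' (sector b ε \ {b}) := by
  have hπ := Real.pi_pos
  set L := trianglePeriodPair l1 hl1
  obtain ⟨K, δ, hδ, hE⟩ :=
    ((L.analyticAt_weierstrassPExcept 0).contDiffAt (n := 1)).exists_lipschitzOnWith_closedBall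
  obtain ⟨ρ, hρ, hsolve⟩ := exists_inv_sq_add_eq_of_lipschitzOnWith hδ
    (L.weierstrassPExcept_zero 0) hE (α := 11 * Real.pi / 16) (η := Real.pi / 16)
    (γ := 3 * Real.pi / 8) (by positivity) (by positivity) (by linarith) (by linarith)
    (by linarith)
  refine ⟨1 / 10, δ, 2 * ρ, -(Real.pi / 2), by norm_num, by norm_num, hδ, by positivity, ?_⟩
  rintro β hβ b hb z ⟨hz, θ, hθ₁, hθ₂, hzθ⟩
  have hβ₁ : ‖β - 1‖ ≤ 1 / 10 := (mem_ball_iff_norm.1 hβ).le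
  have hβ₀ : β ≠ 0 := by rintro rfl; norm_num at hβ₁
  have hz₀ : z ≠ 0 := norm_pos_iff.1 (by linarith)
  have hz_arg : |arg z| ≤ 5 * Real.pi / 8 := by
    rw [hzθ, exp_mul_I, arg_mul_cos_add_sin_mul_I (norm_pos_iff.2 hz₀) ⟨by linarith, by linarith⟩]
    exact abs_le.2 ⟨by linarith, by linarith⟩
  have hβ_inv : ‖β⁻¹ - 1‖ ≤ Real.sin (Real.pi / 16) := calc
    ‖β⁻¹ - 1‖ ≤ 1 / 10 / (1 - 1 / 10) := norm_inv_sub_one_le (by norm_num) hβ₁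
    _ ≤ 2 / Real.pi * (Real.pi / 16) := by field_simp; norm_num
    _ ≤ Real.sin (Real.pi / 16) := Real.mul_le_sin (by positivity) (by linarith)
  have hw_norm : ρ ≤ ‖z / β‖ := by
    rw [norm_div, le_div_iff₀ (norm_pos_iff.2 hβ₀)]
    nlinarith [norm_sub_norm_le β 1, norm_one (α := ℂ)]
  have hw_arg : |arg (z / β)| ≤ 11 * Real.pi / 16 :=
    (abs_arg_mul_le_of_norm_sub_one_le hz₀ (by positivity) (by linarith) hβ_inv
      (by linarith)).trans (by linarith)
  obtain ⟨ζ, hζ, hζ₀, hζ_arg, hζ_eq⟩ := hsolve (z / β) hw_norm hw_arg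
  refine ⟨ζ + b, ⟨⟨by simpa using hζ, ?_, ?_⟩, by simpa using hζ₀⟩, ?_⟩
  · rw [add_sub_cancel_right]; linarith [neg_abs_le (arg ζ)]
  · rw [add_sub_cancel_right]; linarith [le_abs_self (arg ζ)]
  · change β * wp l1 (ζ + b) = z
    rw [wp_add_of_mem_lattice hl1 hb, hζ_eq, mul_div_cancel₀ _ hβ₀]
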